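/- arXiv:1409.8234 — 3 statements merged into one kernel-verified Lean document; each statement's English description precedes it below -/
import Mathlib

section
/- Let g : ℤ → ℂ be a function supported on a finite set S ⊆ ℤ, and let H ⊆ ℤ be a finite nonempty set. For h ∈ ℤ let r_H(h) denote the number of pairs (h₁, h₂) ∈ H × H with h₁ - h₂ = h. Then |∑_y g(y)|² ≤ (|S - H| / |H|²) · ∑_h r_H(h) · ∑_y g(y+h) · conj(g(y)), where S - H denotes the difference set {s - h : s ∈ S, h ∈ H}. -/
open Finset Pointwise ComplexConjugate

/-! Every translate `S + h`, `h ∈ H`, is contained in `(S - H) + h`, so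
`|H| ∑_y g y = ∑_{y ∈ S - H} ∑_{h ∈ H} g (y + h)`, a sum of `|S - H|` terms. Cauchy–Schwarz bounds
its square by `|S - H| ∑_y |∑_{h ∈ H} g (y + h)|²`, and expanding the square into pairs `(h₁, h₂)`,
the substitution `y ↦ y - h₂` leaves a correlation of `g` that depends only on `h₁ - h₂`. -/

section Shift

variable {G : Type*} [AddCommGroup G]

theorem sum_comp_add_right_of_support_subset {M : Type*} [AddCommMonoid M] {f : G → M}
    {S T : Finset G} {b : G} (hf : ∀ y ∉ S, f y = 0) (hST : ∀ s ∈ S, s - b ∈ T) :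
    ∑ y ∈ T, f (y + b) = ∑ y ∈ S, f y := by
  refine (sum_map T (addRightEmbedding b) f).symm.trans (sum_subset ?_ fun y _ hy => hf y hy).symm
  exact fun s hs => mem_map.2 ⟨s - b, hST s hs, sub_add_cancel s b⟩

variable {𝕜 : Type*} [RCLike 𝕜] {g : G → 𝕜} {S T : Finset G}

theorem sum_mul_conj_comp_add_right (hg : ∀ y ∉ S, g y = 0) {a b : G}
    (hST : ∀ s ∈ S, s - b ∈ T) :
    ∑ y ∈ T, g (y + a) * conj (g (y + b)) = ∑ y ∈ S, g (y + (a - b)) * conj (g y) := by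
  have := sum_comp_add_right_of_support_subset
    (f := fun z => g (z + (a - b)) * conj (g z)) (by intro y hy; simp [hg y hy]) hST
  simpa only [add_add_sub_cancel] using this

end Shift

theorem RCLike.norm_sum_sq_eq_re_sum_mul_conj {ι 𝕜 : Type*} [RCLike 𝕜] (s : Finset ι) (z : ι → 𝕜) :
    ‖∑ i ∈ s, z i‖ ^ 2 = RCLike.re (∑ p ∈ s ×ˢ s, z p.1 * conj (z p.2)) := by
  rw [sum_product' (f := fun i j => z i * conj (z j)), ← sum_mul_sum, ← map_sum, RCLike.mul_conj,
    ← RCLike.ofReal_pow, RCLike.ofReal_re]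

theorem norm_sum_sq_le_card_mul_sum_norm_sq {ι E : Type*} [SeminormedAddCommGroup E]
    (s : Finset ι) (f : ι → E) : ‖∑ i ∈ s, f i‖ ^ 2 ≤ #s * ∑ i ∈ s, ‖f i‖ ^ 2 :=
  (pow_le_pow_left₀ (norm_nonneg _) (norm_sum_le s f) 2).trans sq_sum_le_card_mul_sum_sq

section Autocorrelation

variable {G : Type*} [AddCommGroup G] [DecidableEq G]

theorem sum_sum_comp_add_eq_card_nsmul {M : Type*} [AddCommMonoid M] {g : G → M} {S : Finset G}
    (hg : ∀ y ∉ S, g y = 0) (H : Finset G) :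
    ∑ y ∈ S - H, ∑ h ∈ H, g (y + h) = #H • ∑ y ∈ S, g y := by
  rw [sum_comm, ← sum_const]
  exact sum_congr rfl fun h hh =>
    sum_comp_add_right_of_support_subset hg fun s hs => sub_mem_sub hs hh

variable {𝕜 : Type*} [RCLike 𝕜] {g : G → 𝕜} {S : Finset G}

theorem sum_norm_sq_sum_comp_add (hg : ∀ y ∉ S, g y = 0) (H : Finset G) :
    ∑ y ∈ S - H, ‖∑ h ∈ H, g (y + h)‖ ^ 2 =
      ∑ h ∈ H - H, (#{p ∈ H ×ˢ H | p.1 - p.2 = h} : ℝ) *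
        RCLike.re (∑ y ∈ S, g (y + h) * conj (g y)) := by
  calc _ = RCLike.re (∑ p ∈ H ×ˢ H, ∑ y ∈ S - H, g (y + p.1) * conj (g (y + p.2))) := by
        simp_rw [RCLike.norm_sum_sq_eq_re_sum_mul_conj, ← map_sum]
        rw [sum_comm]
    _ = RCLike.re (∑ p ∈ H ×ˢ H, ∑ y ∈ S, g (y + (p.1 - p.2)) * conj (g y)) := by
        congr 1
        exact sum_congr rfl fun p hp => sum_mul_conj_comp_add_right hg fun s hs =>
          sub_mem_sub hs (mem_product.1 hp).2
    _ = _ := by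
        rw [sum_comp (fun h => ∑ y ∈ S, g (y + h) * conj (g y)) (fun p : G × G => p.1 - p.2),
          image_sub_product, map_sum]
        exact sum_congr rfl fun h _ => by rw [map_nsmul, nsmul_eq_mul]

end Autocorrelation

/-- van der Corput's inequality. -/
theorem vdc_inequality (g : ℤ → ℂ) (S H : Finset ℤ)
    (hg : ∀ y ∉ S, g y = 0) (hH : H.Nonempty) :
    ‖∑ y ∈ S, g y‖ ^ 2 ≤
      ((S - H).card : ℝ) / ((H.card : ℝ) ^ 2) *
        (∑ h ∈ H - H,
          (((H ×ˢ H).filter (fun p => p.1 - p.2 = h)).card : ℝ) *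
            (∑ y ∈ S, g (y + h) * (starRingEnd ℂ) (g y)).re) := by
  have hH2 : (0 : ℝ) < (#H : ℝ) ^ 2 := by have := hH.card_pos; positivity
  rw [div_mul_eq_mul_div, le_div_iff₀ hH2]
  calc ‖∑ y ∈ S, g y‖ ^ 2 * #H ^ 2 = ‖∑ y ∈ S - H, ∑ h ∈ H, g (y + h)‖ ^ 2 := by
        rw [sum_sum_comp_add_eq_card_nsmul hg, RCLike.norm_nsmul ℝ, nsmul_eq_mul]
        ring
    _ ≤ #(S - H) * ∑ y ∈ S - H, ‖∑ h ∈ H, g (y + h)‖ ^ 2 :=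
        norm_sum_sq_le_card_mul_sum_norm_sq _ _
    _ = _ := by rw [sum_norm_sq_sum_comp_add hg]; rfl
end

section
/- Let g₀, g₁, g₂ : ℤ → ℝ be functions supported on [-N, N] with values in [-1,1], and let a = (a₀, a₁) ∈ ℤ² with a₀ ≠ 0 and a₁ ≠ 0. Then |∑_{z₀,z₁ ∈ ℤ} g₀(z₀)·g₁(z₁)·g₂(a₀z₀ + a₁z₁)| ≤ C · N^{5/4} · ‖g₂‖_{U²} for an absolute constant C, where ‖f‖_{U²}⁴ = ∑_{h₁,h₂,x} f(x)f(x+h₁)f(x+h₂)f(x+h₁+h₂). -/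
/-!
Write the bilinear sum as `S = ∑ z₀, g₀ z₀ * T (a₀ * z₀)` with
`T x = ∑ z₁, g₁ z₁ * g₂ (x + a₁ * z₁)`. Cauchy–Schwarz in `z₀` (the map `z₀ ↦ a₀ * z₀` being
injective) gives `S² ≤ ‖g₀‖₂² * ∑ x, T x ²`. Expanding the square and translating,
`∑ x, T x ² = ∑ d, c₁ d * c₂ (a₁ * d)`, where `cᵢ h = ∑ x, gᵢ (x + h) * gᵢ x` is the
autocorrelation, and `‖f‖_{U²}⁴ = ∑ h, c_f h ²`; a second Cauchy–Schwarz therefore yields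
`S⁴ ≤ ‖g₀‖₂⁴ ‖g₁‖_{U²}⁴ ‖g₂‖_{U²}⁴`, the physical-space form of the Hölder bound
`‖ĝ₀‖₂ ‖ĝ₁‖₄ ‖ĝ₂‖₄`. For `1`-bounded functions on `[-N, N]` the trivial bounds
`‖g₀‖₂² ≤ 2N + 1` and `‖g₁‖_{U²}⁴ ≤ (2N + 1)³` finish the proof.
-/

open Finset

/-- The multiplicative difference operator `Δ_h f (x) = f (x + h) * f x`. -/
noncomputable def deltaOp (h : ℤ) (f : ℤ → ℝ) : ℤ → ℝ := fun x => f (x + h) * f x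

/-- `gowersSum d f = ‖f‖_{U^d}^{2^d} = ∑_{h₁,…,h_d} ∑_x Δ_{h₁} ⋯ Δ_{h_d} f (x)`. -/
noncomputable def gowersSum : ℕ → (ℤ → ℝ) → ℝ
  | 0, f => ∑ᶠ x : ℤ, f x
  | d + 1, f => ∑ᶠ h : ℤ, gowersSum d (deltaOp h f)

open Function

section FinsumTools

variable {α β M : Type*}

lemma Function.HasFiniteSupport.comp_add_right [AddGroup α] [Zero M] {f : α → M}
    (hf : HasFiniteSupport f) (c : α) : HasFiniteSupport fun x => f (x + c) :=
  hf.comp_of_injective (add_left_injective c)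

lemma finsum_comp_add_right [AddGroup α] [AddCommMonoid M] (f : α → M) (c : α) :
    ∑ᶠ x, f (x + c) = ∑ᶠ x, f x :=
  finsum_comp_equiv (Equiv.addRight c)

lemma finsum_comp_add_left [AddGroup α] [AddCommMonoid M] (f : α → M) (c : α) :
    ∑ᶠ x, f (c + x) = ∑ᶠ x, f x :=
  finsum_comp_equiv (Equiv.addLeft c)

lemma finsum_comp_le_finsum [AddCommMonoid M] [PartialOrder M] [AddLeftMono M] {g : α → β}
    (hg : Injective g) {f : β → M} (hf : HasFiniteSupport f) (hf₀ : 0 ≤ f) :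
    ∑ᶠ i, f (g i) ≤ ∑ᶠ j, f j := by
  rw [← finsum_mem_range hg, finsum_mem_def]
  refine finsum_le_finsum' (hf.subset ?_) hf (Set.indicator_le_self' fun x _ => hf₀ x)
  exact (Set.support_indicator ..).trans_subset Set.inter_subset_right

lemma finsum_mul_sq_le_sq_mul_sq [CommRing M] [LinearOrder M] [IsStrictOrderedRing M]
    {f g : α → M} (hf : HasFiniteSupport f) (hg : HasFiniteSupport g) :
    (∑ᶠ i, f i * g i) ^ 2 ≤ (∑ᶠ i, f i ^ 2) * ∑ᶠ i, g i ^ 2 := by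
  obtain ⟨s, hs⟩ := Set.Finite.exists_finset_coe (hf.union hg)
  have hfs : support f ⊆ s := hs ▸ Set.subset_union_left
  have hgs : support g ⊆ s := hs ▸ Set.subset_union_right
  rw [finsum_eq_finsetSum_of_support_subset _ ((support_mul_subset_left f g).trans hfs),
    finsum_eq_finsetSum_of_support_subset _ ((support_pow f two_ne_zero).trans_subset hfs),
    finsum_eq_finsetSum_of_support_subset _ ((support_pow g two_ne_zero).trans_subset hgs)]
  exact s.sum_mul_sq_le_sq_mul_sq f g

lemma finsum_finsum_mul_comm [NonUnitalNonAssocSemiring M] [NoZeroDivisors M] {v : β → M}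
    (hv : HasFiniteSupport v) {F : α → β → M}
    (hF : ∀ z, HasFiniteSupport fun x => F x z) :
    ∑ᶠ x, ∑ᶠ z, v z * F x z = ∑ᶠ z, v z * ∑ᶠ x, F x z := by
  obtain ⟨s, hs⟩ := Set.Finite.exists_finset_coe hv
  have hsub : ∀ G : β → M, support (fun z => v z * G z) ⊆ s := fun G =>
    (support_mul_subset_left _ _).trans hs.superset
  simp_rw [finsum_eq_finsetSum_of_support_subset _ (hsub _)]
  rw [finsum_sum_comm _ _ fun z _ => (hF z).fun_mul_right _]
  simp_rw [mul_finsum]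

end FinsumTools

section Autocorrelation

variable {f : ℤ → ℝ}

noncomputable def autocorr (f : ℤ → ℝ) (h : ℤ) : ℝ := ∑ᶠ x, f (x + h) * f x

lemma autocorr_eq_sum {s : Finset ℤ} (hs : support f ⊆ s) (h : ℤ) :
    autocorr f h = ∑ x ∈ s, f (x + h) * f x :=
  finsum_eq_finsetSum_of_support_subset _ ((support_mul_subset_right _ _).trans hs)

lemma hasFiniteSupport_autocorr (hf : HasFiniteSupport f) :
    HasFiniteSupport (autocorr f) := by
  obtain ⟨s, hs⟩ := Set.Finite.exists_finset_coe hf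
  rw [show autocorr f = _ from funext (autocorr_eq_sum hs.superset)]
  exact HasFiniteSupport.sum
    (fun x => (hf.comp_of_injective (add_right_injective x)).fun_mul_left _) s

lemma gowersSum_one_eq_sq (hf : HasFiniteSupport f) : gowersSum 1 f = (∑ᶠ x, f x) ^ 2 := by
  obtain ⟨s, hs⟩ := Set.Finite.exists_finset_coe hf
  change ∑ᶠ h, autocorr f h = _
  simp_rw [autocorr_eq_sum hs.superset]
  rw [finsum_sum_comm s (fun h x => f (x + h) * f x)
    fun x _ => (hf.comp_of_injective (add_right_injective x)).fun_mul_left _]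
  simp_rw [← finsum_mul, finsum_comp_add_left f, ← Finset.mul_sum, sq,
    finsum_eq_finsetSum_of_support_subset f hs.superset]

lemma gowersSum_two_eq (hf : HasFiniteSupport f) :
    gowersSum 2 f = ∑ᶠ h, autocorr f h ^ 2 :=
  finsum_congr fun h => gowersSum_one_eq_sq ((hf.comp_add_right h).fun_mul_left _)

lemma gowersSum_two_nonneg (hf : HasFiniteSupport f) : 0 ≤ gowersSum 2 f :=
  gowersSum_two_eq hf ▸ finsum_nonneg fun _ => sq_nonneg _

end Autocorrelation

section BilinearEstimate

variable {u v f : ℤ → ℝ}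

lemma finsum_mul_finsum_mul_comp_add (hv : HasFiniteSupport v) (hf : HasFiniteSupport f)
    (a z : ℤ) :
    ∑ᶠ x, f (x + a * z) * ∑ᶠ z', v z' * f (x + a * z') =
      ∑ᶠ z', v z' * autocorr f (a * (z' - z)) := by
  calc ∑ᶠ x, f (x + a * z) * ∑ᶠ z', v z' * f (x + a * z')
      = ∑ᶠ x, f x * ∑ᶠ z', v z' * f (x + a * (z' - z)) := by
        rw [← finsum_comp_add_right _ (-(a * z))]
        refine finsum_congr fun x => ?_
        rw [neg_add_cancel_right]
        congr 1
        exact finsum_congr fun z' => by ring_nf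
    _ = ∑ᶠ x, ∑ᶠ z', v z' * (f (x + a * (z' - z)) * f x) := by
        refine finsum_congr fun x => ?_
        rw [mul_finsum]
        exact finsum_congr fun z' => by ring
    _ = ∑ᶠ z', v z' * autocorr f (a * (z' - z)) :=
        finsum_finsum_mul_comm hv fun z' => (hf.comp_add_right _).fun_mul_left _

lemma finsum_sq_finsum_mul_comp_add (hv : HasFiniteSupport v) (hf : HasFiniteSupport f)
    (a : ℤ) :
    ∑ᶠ x, (∑ᶠ z, v z * f (x + a * z)) ^ 2 = ∑ᶠ d, autocorr v d * autocorr f (a * d) := by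
  calc ∑ᶠ x, (∑ᶠ z, v z * f (x + a * z)) ^ 2
      = ∑ᶠ x, ∑ᶠ z, v z * (f (x + a * z) * ∑ᶠ z', v z' * f (x + a * z')) := by
        simp_rw [sq, finsum_mul, mul_assoc]
    _ = ∑ᶠ z, v z * ∑ᶠ z', v z' * autocorr f (a * (z' - z)) := by
        rw [finsum_finsum_mul_comm hv fun z => (hf.comp_add_right _).fun_mul_left _]
        simp_rw [finsum_mul_finsum_mul_comp_add hv hf]
    _ = ∑ᶠ z, v z * ∑ᶠ d, v (z + d) * autocorr f (a * d) := by
        refine finsum_congr fun z => congrArg _ ?_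
        rw [← finsum_comp_add_left (fun z' => v z' * autocorr f (a * (z' - z))) z]
        simp only [add_sub_cancel_left]
    _ = ∑ᶠ d, autocorr v d * autocorr f (a * d) := by
        rw [← finsum_finsum_mul_comm (F := fun d z => v (z + d) * autocorr f (a * d)) hv
          fun z => (hv.comp_of_injective (add_right_injective z)).fun_mul_left _]
        simp_rw [autocorr, finsum_mul]
        exact finsum_congr fun d => finsum_congr fun z => by ring

theorem finsum_bilinear_pow_four_le (hu : HasFiniteSupport u) (hv : HasFiniteSupport v)
    (hf : HasFiniteSupport f) {a₀ a₁ : ℤ} (ha₀ : a₀ ≠ 0) (ha₁ : a₁ ≠ 0) :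
    (∑ᶠ z₀, ∑ᶠ z₁, u z₀ * v z₁ * f (a₀ * z₀ + a₁ * z₁)) ^ 4 ≤
      (∑ᶠ z, u z ^ 2) ^ 2 * gowersSum 2 v * gowersSum 2 f := by
  set T : ℤ → ℝ := fun x => ∑ᶠ z, v z * f (x + a₁ * z)
  have hT : HasFiniteSupport T := by
    obtain ⟨s, hs⟩ := Set.Finite.exists_finset_coe hv
    have hTs : T = fun x => ∑ z ∈ s, v z * f (x + a₁ * z) := funext fun x =>
      finsum_eq_finsetSum_of_support_subset _ ((support_mul_subset_left _ _).trans hs.superset)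
    exact hTs ▸ HasFiniteSupport.sum (fun z => (hf.comp_add_right _).fun_mul_right _) s
  have hS : ∑ᶠ z₀, ∑ᶠ z₁, u z₀ * v z₁ * f (a₀ * z₀ + a₁ * z₁) = ∑ᶠ z₀, u z₀ * T (a₀ * z₀) :=
    finsum_congr fun z₀ => by rw [mul_finsum]; exact finsum_congr fun z₁ => by ring
  have hS2 : (∑ᶠ z₀, u z₀ * T (a₀ * z₀)) ^ 2 ≤ (∑ᶠ z, u z ^ 2) * ∑ᶠ x, T x ^ 2 :=
    (finsum_mul_sq_le_sq_mul_sq hu (hT.comp_of_injective (mul_right_injective₀ ha₀))).trans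
      (mul_le_mul_of_nonneg_left (finsum_comp_le_finsum (mul_right_injective₀ ha₀)
        (hT.subset (support_pow _ two_ne_zero).le) fun _ => sq_nonneg _)
        (finsum_nonneg fun _ => sq_nonneg _))
  have hT2 : (∑ᶠ x, T x ^ 2) ^ 2 ≤ gowersSum 2 v * gowersSum 2 f := by
    have hcf := hasFiniteSupport_autocorr hf
    rw [finsum_sq_finsum_mul_comp_add hv hf, gowersSum_two_eq hv, gowersSum_two_eq hf]
    exact (finsum_mul_sq_le_sq_mul_sq (hasFiniteSupport_autocorr hv)
      (hcf.comp_of_injective (mul_right_injective₀ ha₁))).trans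
      (mul_le_mul_of_nonneg_left (finsum_comp_le_finsum (mul_right_injective₀ ha₁)
        (hcf.subset (support_pow _ two_ne_zero).le) fun _ => sq_nonneg _)
        (finsum_nonneg fun _ => sq_nonneg _))
  rw [hS]
  calc (∑ᶠ z₀, u z₀ * T (a₀ * z₀)) ^ 4 = ((∑ᶠ z₀, u z₀ * T (a₀ * z₀)) ^ 2) ^ 2 := by ring
    _ ≤ ((∑ᶠ z, u z ^ 2) * ∑ᶠ x, T x ^ 2) ^ 2 := pow_le_pow_left₀ (sq_nonneg _) hS2 2
    _ = (∑ᶠ z, u z ^ 2) ^ 2 * (∑ᶠ x, T x ^ 2) ^ 2 := mul_pow _ _ 2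
    _ ≤ (∑ᶠ z, u z ^ 2) ^ 2 * (gowersSum 2 v * gowersSum 2 f) :=
        mul_le_mul_of_nonneg_left hT2 (sq_nonneg _)
    _ = (∑ᶠ z, u z ^ 2) ^ 2 * gowersSum 2 v * gowersSum 2 f := (mul_assoc _ _ _).symm

end BilinearEstimate

section BoundedFunctions

variable {g : ℤ → ℝ} {s : Finset ℤ}

lemma finsum_sq_le_card (hg : ∀ x, |g x| ≤ 1) (hs : support g ⊆ s) : ∑ᶠ x, g x ^ 2 ≤ #s := by
  rw [finsum_eq_finsetSum_of_support_subset _ ((support_pow g two_ne_zero).trans_subset hs)]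
  simpa using sum_le_sum fun x (_ : x ∈ s) => (sq_le_one_iff_abs_le_one _).2 (hg x)

lemma gowersSum_two_le_card_pow_three (hg : ∀ x, |g x| ≤ 1) (hs : support g ⊆ s) :
    gowersSum 2 g ≤ #s ^ 3 := by
  have hgf : HasFiniteSupport g := s.finite_toSet.subset hs
  have hshift : ∀ x : ℤ, HasFiniteSupport fun h => g (x + h) ^ 2 := fun x =>
    (hgf.comp_of_injective (add_right_injective x)).subset (support_pow _ two_ne_zero).le
  rw [gowersSum_two_eq hgf]
  calc ∑ᶠ h, autocorr g h ^ 2 ≤ ∑ᶠ h, #s * ∑ x ∈ s, g (x + h) ^ 2 := by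
        refine finsum_le_finsum'
          ((hasFiniteSupport_autocorr hgf).subset (support_pow _ two_ne_zero).le)
          ((HasFiniteSupport.sum hshift s).fun_mul_right _) fun h => ?_
        rw [autocorr_eq_sum hs]
        refine sq_sum_le_card_mul_sum_sq.trans (mul_le_mul_of_nonneg_left
          (sum_le_sum fun x _ => ?_) (Nat.cast_nonneg _))
        rw [mul_pow]
        exact mul_le_of_le_one_right (sq_nonneg _) ((sq_le_one_iff_abs_le_one _).2 (hg x))
    _ = #s * ∑ x ∈ s, ∑ᶠ y, g y ^ 2 := by
        rw [← mul_finsum, finsum_sum_comm s (fun h x => g (x + h) ^ 2) fun x _ => hshift x]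
        simp_rw [finsum_comp_add_left fun y => g y ^ 2]
    _ ≤ #s * ∑ _x ∈ s, (#s : ℝ) := by gcongr; exact finsum_sq_le_card hg hs
    _ = #s ^ 3 := by rw [sum_const, nsmul_eq_mul]; ring

end BoundedFunctions

lemma abs_le_mul_rpow_of_pow_four_le {S C N G : ℝ} (hC : 0 ≤ C) (hN : 0 ≤ N) (hG : 0 ≤ G)
    (h : S ^ 4 ≤ C ^ 4 * N ^ 5 * G) :
    |S| ≤ C * N ^ ((5 : ℝ) / 4) * G ^ ((1 : ℝ) / 4) := by
  refine le_of_pow_le_pow_left₀ four_ne_zero (by positivity) ?_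
  rw [Even.pow_abs ⟨2, rfl⟩, mul_pow, mul_pow, ← Real.rpow_natCast (N ^ _),
    ← Real.rpow_natCast (G ^ _), ← Real.rpow_mul hN, ← Real.rpow_mul hG]
  norm_num
  exact h

/-- Base case of the generalised von Neumann estimate: if `g₀, g₁, g₂` are
`1`-bounded and supported on `[-N, N]` and `a₀, a₁` are nonzero integers, then
`|∑_{z₀,z₁} g₀(z₀) g₁(z₁) g₂(a₀z₀ + a₁z₁)| ≤ C N^{5/4} ‖g₂‖_{U²}`. -/
theorem bilinear_U2_von_neumann :
    ∃ C : ℝ, 0 < C ∧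
      ∀ (N : ℕ), 1 ≤ N → ∀ (g₀ g₁ g₂ : ℤ → ℝ) (a₀ a₁ : ℤ),
        a₀ ≠ 0 → a₁ ≠ 0 →
        (∀ x, |g₀ x| ≤ 1) → (∀ x, |g₁ x| ≤ 1) → (∀ x, |g₂ x| ≤ 1) →
        (∀ x : ℤ, x ∉ Set.Icc (-(N : ℤ)) N → g₀ x = 0) →
        (∀ x : ℤ, x ∉ Set.Icc (-(N : ℤ)) N → g₁ x = 0) →
        (∀ x : ℤ, x ∉ Set.Icc (-(N : ℤ)) N → g₂ x = 0) →
        |∑ᶠ z₀ : ℤ, ∑ᶠ z₁ : ℤ, g₀ z₀ * g₁ z₁ * g₂ (a₀ * z₀ + a₁ * z₁)| ≤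
          C * (N : ℝ) ^ ((5 : ℝ) / 4) * gowersSum 2 g₂ ^ ((1 : ℝ) / 4) := by
  refine ⟨4, four_pos, fun N hN g₀ g₁ g₂ a₀ a₁ ha₀ ha₁ hb₀ hb₁ _ hs₀ hs₁ hs₂ => ?_⟩
  set I := Icc (-(N : ℤ)) N
  have hI : ∀ g : ℤ → ℝ, (∀ x, x ∉ Set.Icc (-(N : ℤ)) N → g x = 0) → support g ⊆ I :=
    fun g hg x hx => by simpa [I] using not_imp_comm.1 (hg x) hx
  have hfin : ∀ g : ℤ → ℝ, (∀ x, x ∉ Set.Icc (-(N : ℤ)) N → g x = 0) → HasFiniteSupport g :=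
    fun g hg => I.finite_toSet.subset (hI g hg)
  have hcard : (#I : ℝ) ≤ 3 * N := by
    have : #I = 2 * N + 1 := by simp only [I, Int.card_Icc]; omega
    rw [this]; push_cast; linarith [(Nat.one_le_cast (α := ℝ)).2 hN]
  have hG : 0 ≤ gowersSum 2 g₂ := gowersSum_two_nonneg (hfin g₂ hs₂)
  refine abs_le_mul_rpow_of_pow_four_le zero_le_four N.cast_nonneg hG
    ((finsum_bilinear_pow_four_le (hfin g₀ hs₀) (hfin g₁ hs₁) (hfin g₂ hs₂) ha₀ ha₁).trans
      (mul_le_mul_of_nonneg_right ?_ hG))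
  calc (∑ᶠ z, g₀ z ^ 2) ^ 2 * gowersSum 2 g₁ ≤ (#I : ℝ) ^ 2 * #I ^ 3 :=
        mul_le_mul (pow_le_pow_left₀ (finsum_nonneg fun _ => sq_nonneg _)
            (finsum_sq_le_card hb₀ (hI g₀ hs₀)) 2)
          (gowersSum_two_le_card_pow_three hb₁ (hI g₁ hs₁))
          (gowersSum_two_nonneg (hfin g₁ hs₁)) (by positivity)
    _ = (#I : ℝ) ^ 5 := by ring
    _ ≤ (3 * N) ^ 5 := pow_le_pow_left₀ (by positivity) hcard 5
    _ ≤ 4 ^ 4 * N ^ 5 := by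
        rw [mul_pow]; exact mul_le_mul_of_nonneg_right (by norm_num) (by positivity)
end

section
/- Suppose that for every δ ∈ (0,1] and every N satisfying N ≥ exp(exp(1/(c·δ^C))) (with fixed constants C ≥ 1, c ∈ (0,1]), any set A ⊆ [N] of density δ = |A|/N lacking a given translation- and k-th-power-dilation-invariant pattern admits a k-th power progression P ⊆ [N] with |P| ≥ N^{exp(-1/(c·δ^C))} and |A ∩ P| ≥ (δ + c·δ^C)|P|. Then any A ⊆ [N] lacking the pattern satisfies |A| ≤ K·N·(log log N)^{-1/C'} for appropriate constants K, C' depending on c, C, provided N ≥ 3. -/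
/-!
Iterate the density increment, tracking the potential `Φ(δ) = (2 - δ) / (cδ^C)²`. One step
replaces `N` by `N₁ ≥ N^{exp(-1/(cδ^C))}`, which lowers `log log N` by at most `1/(cδ^C)`, and
raises the density to at least `δ + cδ^C`, which lowers `Φ` by at least `1/(cδ^C)`. The
iteration stops once `N < exp exp (1/(cδ^C))`, where `log log N ≤ 1/(cδ^C) ≤ Φ(δ)`. Hence
`log log N ≤ Φ(δ) ≤ 2/(cδ^C)²` throughout, i.e. `δ ≪ (log log N)^{-1/(2C)}`.
-/

open Finset Real

def PatternFree {n : ℕ} (cs : Fin n → ℤ) (k : ℕ) (A : Finset ℤ) : Prop :=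
  ¬∃ x y : ℤ, y ≠ 0 ∧ x ∈ A ∧ ∀ i, x + cs i * y ^ k ∈ A

def HasDensityIncrement {n : ℕ} (cs : Fin n → ℤ) (k : ℕ) (c C : ℝ) : Prop :=
  ∀ (N : ℕ) (A : Finset ℤ) (δ : ℝ), 0 < δ → δ ≤ 1 →
    (A : Set ℤ) ⊆ Set.Icc (1 : ℤ) N → (A.card : ℝ) = δ * N →
    PatternFree cs k A →
    exp (exp (1 / (c * δ ^ C))) ≤ (N : ℝ) →
    ∃ (a : ℤ) (q N₁ : ℕ), 1 ≤ q ∧ 1 ≤ N₁ ∧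
      (∀ z ∈ Icc (1 : ℤ) N₁, a + (q : ℤ) ^ k * z ∈ Icc (1 : ℤ) N) ∧
      (N : ℝ) ^ exp (-(1 / (c * δ ^ C))) ≤ N₁ ∧
      (δ + c * δ ^ C) * N₁ ≤ ((A ∩ (Icc (1 : ℤ) N₁).image fun z => a + (q : ℤ) ^ k * z).card : ℝ)

noncomputable def densityPotential (c C δ : ℝ) : ℝ := (2 - δ) / (c * δ ^ C) ^ 2

section Analysis

variable {c C : ℝ}

theorem log_log_natCast_le_of_le_exp_exp {N : ℕ} {t : ℝ} (ht : 0 ≤ t)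
    (h : (N : ℝ) ≤ exp (exp t)) : log (log N) ≤ t := by
  rcases N.eq_zero_or_pos with rfl | hN
  · simpa using ht
  have hlog : log N ≤ exp t := (log_le_iff_le_exp (by positivity)).2 h
  rcases (log_natCast_nonneg N).eq_or_lt with hzero | hpos
  · simpa [← hzero] using ht
  · exact (log_le_iff_le_exp hpos).2 hlog

theorem log_log_le_add_log_log_of_rpow_exp_neg_le {x y t : ℝ} (hx : 1 < x)
    (h : x ^ exp (-t) ≤ y) : log (log x) ≤ t + log (log y) := by
  have hlogx : 0 < log x := log_pos hx
  have hscaled : 0 < exp (-t) * log x := mul_pos (exp_pos _) hlogx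
  have hlogy : exp (-t) * log x ≤ log y := by
    rw [← log_rpow (by linarith)]
    exact log_le_log (by positivity) h
  calc log (log x) = t + log (exp (-t) * log x) := by
        rw [log_mul (exp_ne_zero _) hlogx.ne', log_exp]; ring
    _ ≤ t + log (log y) := add_le_add le_rfl (log_le_log hscaled hlogy)

theorem densityPotential_antitoneOn (hc : 0 < c) (hC : 0 ≤ C) :
    AntitoneOn (densityPotential c C) (Set.Ioc 0 2) := by
  rintro x ⟨hx, -⟩ y ⟨-, hy2⟩ hxy
  unfold densityPotential
  have hxy' : x ^ C ≤ y ^ C := rpow_le_rpow hx.le hxy hC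
  gcongr
  linarith

theorem inv_add_densityPotential_le (hc : 0 < c) (hC : 0 ≤ C) {δ δ₁ : ℝ} (hδ : 0 < δ)
    (hδ₁ : δ + c * δ ^ C ≤ δ₁) (hδ₁2 : δ₁ ≤ 2) :
    1 / (c * δ ^ C) + densityPotential c C δ₁ ≤ densityPotential c C δ := by
  set s := c * δ ^ C
  have hs : 0 < s := by positivity
  have hstep : densityPotential c C (δ + s) ≤ (2 - (δ + s)) / s ^ 2 := by
    unfold densityPotential
    gcongr
    · linarith
    · exact mul_le_mul_of_nonneg_left (rpow_le_rpow hδ.le (by linarith) hC) hc.le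
  have hmono : densityPotential c C δ₁ ≤ densityPotential c C (δ + s) :=
    densityPotential_antitoneOn hc hC ⟨by linarith, by linarith⟩ ⟨by linarith, hδ₁2⟩ hδ₁
  have hsum : 1 / s + (2 - (δ + s)) / s ^ 2 = densityPotential c C δ := by
    unfold densityPotential
    field_simp
    ring
  linarith

theorem inv_le_densityPotential (hc : 0 < c) (hc1 : c ≤ 1) (hC : 0 ≤ C) {δ : ℝ}
    (hδ : 0 < δ) (hδ1 : δ ≤ 1) : 1 / (c * δ ^ C) ≤ densityPotential c C δ := by
  have hs : 0 < c * δ ^ C := by positivity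
  have hs1 : c * δ ^ C ≤ 1 := mul_le_one₀ hc1 (by positivity) (rpow_le_one hδ.le hδ1 hC)
  unfold densityPotential
  rw [div_le_div_iff₀ hs (by positivity)]
  nlinarith

theorem le_mul_rpow_neg_of_le_two_div_sq (hc : 0 < c) (hC : 0 < C) {δ L : ℝ} (hδ : 0 < δ)
    (hL : 0 < L) (h : L ≤ 2 / (c * δ ^ C) ^ 2) :
    δ ≤ (2 / c ^ 2) ^ (1 / (2 * C)) * L ^ (-(1 / (2 * C))) := by
  have hsq : (c * δ ^ C) ^ 2 = c ^ 2 * δ ^ (2 * C) := by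
    rw [mul_pow, mul_comm 2 C, rpow_mul hδ.le, rpow_two]
  rw [hsq, le_div_iff₀ (by positivity)] at h
  have hpow : δ ^ (2 * C) ≤ 2 / c ^ 2 / L := by
    rw [le_div_iff₀ hL, le_div_iff₀ (by positivity)]; linarith
  calc δ = (δ ^ (2 * C)) ^ (1 / (2 * C)) := by
        rw [← rpow_mul hδ.le, mul_one_div_cancel (by positivity), rpow_one]
    _ ≤ (2 / c ^ 2 / L) ^ (1 / (2 * C)) := by gcongr
    _ = (2 / c ^ 2) ^ (1 / (2 * C)) * L ^ (-(1 / (2 * C))) := by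
        rw [div_rpow (by positivity) hL.le, rpow_neg hL.le, div_eq_mul_inv]

end Analysis

section Increment

variable {n k : ℕ} {cs : Fin n → ℤ} {c C : ℝ}

theorem PatternFree.filter_affine {A : Finset ℤ} (hA : PatternFree cs k A) (S : Finset ℤ)
    {a q : ℤ} (hq : q ≠ 0) : PatternFree cs k (S.filter fun z => a + q ^ k * z ∈ A) := by
  rintro ⟨x, y, hy, hx, hxy⟩
  refine hA ⟨a + q ^ k * x, q * y, mul_ne_zero hq hy, (mem_filter.1 hx).2, fun i => ?_⟩
  convert (mem_filter.1 (hxy i)).2 using 1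
  ring

theorem card_le_of_coe_subset_Icc {A : Finset ℤ} {N : ℕ} (hA : (A : Set ℤ) ⊆ Set.Icc 1 N) :
    A.card ≤ N := by
  simpa using card_le_card (show A ⊆ Icc 1 (N : ℤ) from fun x hx => by simpa using hA hx)

theorem card_div_le_one_of_coe_subset_Icc {A : Finset ℤ} {N : ℕ}
    (hA : (A : Set ℤ) ⊆ Set.Icc 1 N) : (A.card / N : ℝ) ≤ 1 :=
  div_le_one_of_le₀ (by exact_mod_cast card_le_of_coe_subset_Icc hA) N.cast_nonneg

/-- `N₁ < N` because `A` has only `δN` elements to spend on the `(δ + cδ^C)N₁` elements of the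
increment. -/
theorem HasDensityIncrement.exists_denser (hinc : HasDensityIncrement cs k c C) (hc : 0 < c)
    {N : ℕ} {A : Finset ℤ} (hA : (A : Set ℤ) ⊆ Set.Icc 1 N) (hfree : PatternFree cs k A)
    (hδ : 0 < (A.card / N : ℝ))
    (hN : exp (exp (1 / (c * (A.card / N : ℝ) ^ C))) ≤ N) :
    ∃ (N₁ : ℕ) (A₁ : Finset ℤ), N₁ < N ∧
      (N : ℝ) ^ exp (-(1 / (c * (A.card / N : ℝ) ^ C))) ≤ N₁ ∧
      (A₁ : Set ℤ) ⊆ Set.Icc 1 N₁ ∧ PatternFree cs k A₁ ∧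
      (A.card / N : ℝ) + c * (A.card / N : ℝ) ^ C ≤ A₁.card / N₁ := by
  set δ : ℝ := A.card / N
  have hN0 : (0 : ℝ) < N := by linarith [one_lt_exp_iff.2 (exp_pos (1 / (c * δ ^ C)))]
  have hcard : (A.card : ℝ) = δ * N := (div_mul_cancel₀ _ hN0.ne').symm
  obtain ⟨a, q, N₁, hq, hN₁, -, hlen, hdens⟩ :=
    hinc N A δ hδ (card_div_le_one_of_coe_subset_Icc hA) hA hcard hfree hN
  set f : ℤ → ℤ := fun z => a + (q : ℤ) ^ k * z
  have hq0 : (q : ℤ) ≠ 0 := by omega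
  have hf : Function.Injective f := fun z w h =>
    mul_left_cancel₀ (pow_ne_zero k hq0) (add_left_cancel h)
  set A₁ := (Icc 1 (N₁ : ℤ)).filter fun z => f z ∈ A
  have hA₁ : (A₁.card : ℝ) = (A ∩ (Icc 1 (N₁ : ℤ)).image f).card := by
    rw [inter_comm, ← filter_mem_eq_inter, filter_image, card_image_of_injective _ hf]
  rw [← hA₁] at hdens
  have hN₁0 : (0 : ℝ) < N₁ := by exact_mod_cast hN₁
  have hs : 0 < c * δ ^ C := mul_pos hc (rpow_pos_of_pos hδ C)
  refine ⟨N₁, A₁, ?_, hlen, fun z hz => mem_Icc.1 (mem_filter.1 hz).1,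
    hfree.filter_affine _ hq0, (le_div_iff₀ hN₁0).2 hdens⟩
  have hA₁A : (A₁.card : ℝ) ≤ A.card := by
    rw [hA₁]; exact_mod_cast card_le_card inter_subset_left
  by_contra! hNN₁
  have : δ * N ≤ δ * N₁ := mul_le_mul_of_nonneg_left (by exact_mod_cast hNN₁) hδ.le
  nlinarith

theorem HasDensityIncrement.log_log_le_densityPotential (hinc : HasDensityIncrement cs k c C)
    (hc : 0 < c) (hc1 : c ≤ 1) (hC : 0 ≤ C) (N : ℕ) (A : Finset ℤ)
    (hA : (A : Set ℤ) ⊆ Set.Icc 1 N) (hfree : PatternFree cs k A)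
    (hδ : 0 < (A.card / N : ℝ)) : log (log N) ≤ densityPotential c C (A.card / N) := by
  induction N using Nat.strong_induction_on generalizing A with
  | _ N ih =>
  set δ : ℝ := A.card / N
  by_cases hN : exp (exp (1 / (c * δ ^ C))) ≤ N
  · obtain ⟨N₁, A₁, hN₁, hlen, hA₁, hfree₁, hδ₁⟩ := hinc.exists_denser hc hA hfree hδ hN
    have hN1 : (1 : ℝ) < N := (one_lt_exp_iff.2 (exp_pos _)).trans_le hN
    calc log (log N) ≤ 1 / (c * δ ^ C) + log (log N₁) :=
          log_log_le_add_log_log_of_rpow_exp_neg_le hN1 hlen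
      _ ≤ 1 / (c * δ ^ C) + densityPotential c C (A₁.card / N₁) := by
          gcongr
          exact ih N₁ hN₁ A₁ hA₁ hfree₁ (lt_of_lt_of_le (by positivity) hδ₁)
      _ ≤ densityPotential c C δ := inv_add_densityPotential_le hc hC hδ hδ₁
          (by linarith [card_div_le_one_of_coe_subset_Icc hA₁])
  · calc log (log N) ≤ 1 / (c * δ ^ C) :=
          log_log_natCast_le_of_le_exp_exp (by positivity) (not_le.1 hN).le
      _ ≤ densityPotential c C δ :=
          inv_le_densityPotential hc hc1 hC hδ (card_div_le_one_of_coe_subset_Icc hA)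

end Increment

theorem increment_implies_bound_general (n k : ℕ)
    (cs : Fin n → ℤ)
    (c C : ℝ) (hc : 0 < c) (hc1 : c ≤ 1) (hC : 1 ≤ C)
    (hinc : ∀ (N : ℕ) (A : Finset ℤ) (δ : ℝ), 0 < δ → δ ≤ 1 →
      (A : Set ℤ) ⊆ Set.Icc (1 : ℤ) N → (A.card : ℝ) = δ * N →
      (¬∃ (x y : ℤ), y ≠ 0 ∧ x ∈ A ∧ ∀ i, x + cs i * y ^ k ∈ A) →
      Real.exp (Real.exp (1 / (c * δ ^ C))) ≤ (N : ℝ) →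
      ∃ (a : ℤ) (q N₁ : ℕ), 1 ≤ q ∧ 1 ≤ N₁ ∧
        (∀ z ∈ Finset.Icc (1 : ℤ) (N₁ : ℤ),
          a + (q : ℤ) ^ k * z ∈ Finset.Icc (1 : ℤ) (N : ℤ)) ∧
        (N : ℝ) ^ Real.exp (-(1 / (c * δ ^ C))) ≤ (N₁ : ℝ) ∧
        (δ + c * δ ^ C) * (N₁ : ℝ) ≤
          ((A ∩ (Finset.Icc (1 : ℤ) (N₁ : ℤ)).image
            (fun z => a + (q : ℤ) ^ k * z)).card : ℝ)) :
    ∃ K C' : ℝ, 0 < K ∧ 0 < C' ∧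
      ∀ N : ℕ, 3 ≤ N → ∀ A : Finset ℤ, (A : Set ℤ) ⊆ Set.Icc (1 : ℤ) N →
        (¬∃ (x y : ℤ), y ≠ 0 ∧ x ∈ A ∧ ∀ i, x + cs i * y ^ k ∈ A) →
        (A.card : ℝ) ≤ K * N * Real.log (Real.log N) ^ (-(1 / C')) := by
  refine ⟨(2 / c ^ 2) ^ (1 / (2 * C)), 2 * C, by positivity, by positivity,
    fun N hN A hA hfree => ?_⟩
  have hN0 : (0 : ℝ) < N := by exact_mod_cast (by omega : 0 < N)
  have hlogN : 1 < log N := by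
    rw [lt_log_iff_exp_lt hN0]
    linarith [exp_one_lt_d9, (show (3 : ℝ) ≤ N by exact_mod_cast hN)]
  rcases A.eq_empty_or_nonempty with rfl | hne
  · simp only [card_empty, Nat.cast_zero]
    exact mul_nonneg (by positivity) (rpow_nonneg (log_pos hlogN).le _)
  set δ : ℝ := A.card / N
  have hδ : 0 < δ := div_pos (by exact_mod_cast hne.card_pos) hN0
  have hpotential : log (log N) ≤ 2 / (c * δ ^ C) ^ 2 :=
    (HasDensityIncrement.log_log_le_densityPotential hinc hc hc1 (by linarith) N A hA hfree
      hδ).trans (div_le_div_of_nonneg_right (by linarith) (sq_nonneg _))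
  have hδ_le := le_mul_rpow_neg_of_le_two_div_sq hc (by linarith) hδ (log_pos hlogN) hpotential
  calc (A.card : ℝ) = δ * N := (div_mul_cancel₀ _ hN0.ne').symm
    _ ≤ (2 / c ^ 2) ^ (1 / (2 * C)) * log (log N) ^ (-(1 / (2 * C))) * N := by gcongr
    _ = _ := by ring

/-- From the density increment lemma to the final bound: if every
configuration-free `A ⊆ [N]` of density `δ` (with `N ≥ exp exp (1/(cδ^C))`)
has a density increment `δ + cδ^C` on a `k`-th power progression of length at
least `N^{exp(-1/(cδ^C))}` contained in `[N]`, then every configuration-free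
`A ⊆ [N]` (for `N ≥ 3`) satisfies `|A| ≤ K·N·(log log N)^{-1/C'}`. -/
theorem increment_implies_bound (n k : ℕ) (hk : 1 ≤ k)
    (cs : Fin n → ℤ) (hcs : ∀ i, cs i ≠ 0)
    (c C : ℝ) (hc : 0 < c) (hc1 : c ≤ 1) (hC : 1 ≤ C)
    (hinc : ∀ (N : ℕ) (A : Finset ℤ) (δ : ℝ), 0 < δ → δ ≤ 1 →
      (A : Set ℤ) ⊆ Set.Icc (1 : ℤ) N → (A.card : ℝ) = δ * N →
      (¬∃ (x y : ℤ), y ≠ 0 ∧ x ∈ A ∧ ∀ i, x + cs i * y ^ k ∈ A) →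
      Real.exp (Real.exp (1 / (c * δ ^ C))) ≤ (N : ℝ) →
      ∃ (a : ℤ) (q N₁ : ℕ), 1 ≤ q ∧ 1 ≤ N₁ ∧
        (∀ z ∈ Finset.Icc (1 : ℤ) (N₁ : ℤ),
          a + (q : ℤ) ^ k * z ∈ Finset.Icc (1 : ℤ) (N : ℤ)) ∧
        (N : ℝ) ^ Real.exp (-(1 / (c * δ ^ C))) ≤ (N₁ : ℝ) ∧
        (δ + c * δ ^ C) * (N₁ : ℝ) ≤
          ((A ∩ (Finset.Icc (1 : ℤ) (N₁ : ℤ)).image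
            (fun z => a + (q : ℤ) ^ k * z)).card : ℝ)) :
    ∃ K C' : ℝ, 0 < K ∧ 0 < C' ∧
      ∀ N : ℕ, 3 ≤ N → ∀ A : Finset ℤ, (A : Set ℤ) ⊆ Set.Icc (1 : ℤ) N →
        (¬∃ (x y : ℤ), y ≠ 0 ∧ x ∈ A ∧ ∀ i, x + cs i * y ^ k ∈ A) →
        (A.card : ℝ) ≤ K * N * Real.log (Real.log N) ^ (-(1 / C')) :=
  increment_implies_bound_general n k cs c C hc hc1 hC hinc
end
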